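/- arXiv:2006.09349 — 4 statements merged into one kernel-verified Lean document; each statement's English description precedes it below -/
import Mathlib

section
/- Let N ∈ ℕ and c₀,…,c_N, d₀,…,d_N ∈ ℝ, let Λ(θ) = Σ_{l=0}^N [c_l cos(lθ) + d_l sin(lθ)], and fix μ ∈ ℝ with |Λ(μ)| ≠ 1. Then as σ → 0⁺, the variance reduction factor converges to the Fisher information at μ: lim_{σ→0⁺} χ(μ,σ)² / (1 − b(μ,σ)²) = Λ'(μ)² / (1 − Λ(μ)²). (In particular, 1 − b(μ,σ)² ≠ 0 for all sufficiently small σ > 0.) -/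
/-!
Substituting `θ = μ + σ x` turns both quantities into expectations against the standard
Gaussian `γ`: `b(μ,σ) = E Λ(μ + σX)` and, since `E X = 0`,
`χ(μ,σ) = E [X (Λ(μ + σX) - Λ μ) / σ]`. For a `K`-Lipschitz `Λ` these integrands are dominated by
`|Λ μ| + K|X|` and `K X²`, so dominated convergence gives `b → Λ μ` and
`χ → Λ'(μ) E X² = Λ'(μ)`. Trigonometric polynomials are Lipschitz and smooth.
-/

open MeasureTheory Filter Topology

/-- The Gaussian density with mean μ and standard deviation σ. -/
noncomputable def gaussDensity (μ σ θ : ℝ) : ℝ :=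
  (Real.sqrt (2 * Real.pi) * σ)⁻¹ * Real.exp (-(θ - μ) ^ 2 / (2 * σ ^ 2))

/-- The expected bias `b(μ,σ) = ∫ p(θ;μ,σ) Λ(θ) dθ`. -/
noncomputable def expBias (Λ : ℝ → ℝ) (μ σ : ℝ) : ℝ :=
  ∫ θ : ℝ, gaussDensity μ σ θ * Λ θ

/-- The chi function `χ(μ,σ) = σ⁻² ∫ (θ−μ) p(θ;μ,σ) Λ(θ) dθ`. -/
noncomputable def chiFun (Λ : ℝ → ℝ) (μ σ : ℝ) : ℝ :=
  (1 / σ ^ 2) * ∫ θ : ℝ, (θ - μ) * gaussDensity μ σ θ * Λ θ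

open Real ProbabilityTheory NNReal

lemma gaussDensity_eq_gaussianPDFReal {σ : ℝ} (hσ : 0 < σ) (μ θ : ℝ) :
    gaussDensity μ σ θ = gaussianPDFReal μ (.mk (σ ^ 2) (sq_nonneg σ)) θ := by
  rw [gaussDensity, gaussianPDFReal_def, NNReal.coe_mk, sqrt_mul' _ (sq_nonneg σ),
    sqrt_sq hσ.le]

lemma gaussianReal_eq_map_const_add_mul (μ σ : ℝ) :
    gaussianReal μ (.mk (σ ^ 2) (sq_nonneg σ)) = (gaussianReal 0 1).map (fun x ↦ μ + σ * x) := by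
  have : (fun x ↦ μ + σ * x) = (μ + ·) ∘ (σ * ·) := rfl
  rw [this, ← Measure.map_map (by fun_prop) (by fun_prop), gaussianReal_map_const_mul,
    gaussianReal_map_const_add, mul_zero, zero_add, mul_one]

lemma integral_gaussDensity_mul {σ : ℝ} (hσ : 0 < σ) (μ : ℝ) (g : ℝ → ℝ) :
    ∫ θ, gaussDensity μ σ θ * g θ = ∫ x, g (μ + σ * x) ∂gaussianReal 0 1 := by
  have hv : (.mk (σ ^ 2) (sq_nonneg σ) : ℝ≥0) ≠ 0 := by
    rw [ne_eq, ← NNReal.coe_eq_zero, NNReal.coe_mk]; positivity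
  have hemb : MeasurableEmbedding (fun x : ℝ ↦ μ + σ * x) :=
    ((Homeomorph.mulLeft₀ σ hσ.ne').trans (Homeomorph.addLeft μ)).measurableEmbedding
  calc ∫ θ, gaussDensity μ σ θ * g θ
      = ∫ θ, gaussianPDFReal μ (.mk (σ ^ 2) (sq_nonneg σ)) θ • g θ := by
        simp_rw [gaussDensity_eq_gaussianPDFReal hσ, smul_eq_mul]
    _ = ∫ x, g (μ + σ * x) ∂gaussianReal 0 1 := by
        rw [← integral_gaussianReal_eq_integral_smul hv, gaussianReal_eq_map_const_add_mul,
          hemb.integral_map]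

lemma integral_sq_gaussianReal_zero_one : ∫ x, x ^ 2 ∂gaussianReal 0 1 = 1 := by
  simpa [variance_eq_integral measurable_id'.aemeasurable] using
    variance_fun_id_gaussianReal (μ := 0) (v := 1)

lemma integrable_sq_gaussianReal (μ : ℝ) (v : ℝ≥0) :
    Integrable (fun x ↦ x ^ 2) (gaussianReal μ v) :=
  (memLp_id_gaussianReal 2).integrable_sq

lemma expBias_eq_integral (Λ : ℝ → ℝ) (μ : ℝ) {σ : ℝ} (hσ : 0 < σ) :
    expBias Λ μ σ = ∫ x, Λ (μ + σ * x) ∂gaussianReal 0 1 :=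
  integral_gaussDensity_mul hσ μ Λ

lemma tendsto_const_add_mul_nhdsGT_zero (μ x : ℝ) :
    Tendsto (fun σ : ℝ ↦ μ + σ * x) (𝓝[>] 0) (𝓝 μ) :=
  (Continuous.tendsto' (by fun_prop) 0 μ (by simp)).mono_left nhdsWithin_le_nhds

lemma DifferentiableAt.tendsto_div_sub_comp_const_add_mul {Λ : ℝ → ℝ} {μ : ℝ}
    (hΛ : DifferentiableAt ℝ Λ μ) (x : ℝ) :
    Tendsto (fun σ ↦ (Λ (μ + σ * x) - Λ μ) / σ) (𝓝[>] 0) (𝓝 (deriv Λ μ * x)) := by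
  have h : HasDerivAt (fun σ ↦ Λ (μ + σ * x)) (deriv Λ μ * x) 0 := by
    have := ((hasDerivAt_id (0 : ℝ)).mul_const x).const_add μ
    simp only [id, one_mul] at this
    exact hΛ.hasDerivAt.comp_of_eq 0 this (by simp)
  simpa [div_eq_inv_mul] using h.tendsto_slope_zero_right

namespace LipschitzWith

variable {Λ : ℝ → ℝ} {K : ℝ≥0} {μ : ℝ}

lemma abs_mul_div_sub_le (hΛ : LipschitzWith K Λ) {σ : ℝ} (hσ : 0 < σ) (x : ℝ) :
    |x * ((Λ (μ + σ * x) - Λ μ) / σ)| ≤ K * x ^ 2 := by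
  have h := hΛ.dist_le_mul (μ + σ * x) μ
  rw [Real.dist_eq, Real.dist_eq, add_sub_cancel_left, abs_mul, abs_of_pos hσ] at h
  rw [abs_mul, abs_div, abs_of_pos hσ, ← sq_abs x, sq, mul_left_comm, mul_comm (K : ℝ)]
  gcongr
  rw [div_le_iff₀ hσ]
  linarith

lemma integrable_mul_div_sub (hΛ : LipschitzWith K Λ) {σ : ℝ} (hσ : 0 < σ) :
    Integrable (fun x ↦ x * ((Λ (μ + σ * x) - Λ μ) / σ)) (gaussianReal 0 1) := by
  have := hΛ.continuous
  exact ((integrable_sq_gaussianReal 0 1).const_mul K).mono'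
    (Continuous.aestronglyMeasurable (by fun_prop))
    (ae_of_all _ fun x ↦ hΛ.abs_mul_div_sub_le hσ x)

lemma chiFun_eq_integral (hΛ : LipschitzWith K Λ) {σ : ℝ} (hσ : 0 < σ) :
    chiFun Λ μ σ = ∫ x, x * ((Λ (μ + σ * x) - Λ μ) / σ) ∂gaussianReal 0 1 := by
  have hid : Integrable (fun x ↦ Λ μ / σ * x) (gaussianReal 0 1) :=
    ((memLp_id_gaussianReal 1).integrable le_rfl).const_mul _
  calc chiFun Λ μ σ = 1 / σ ^ 2 * ∫ θ, gaussDensity μ σ θ * ((θ - μ) * Λ θ) := by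
        rw [chiFun]
        congr 2 with θ
        ring
    _ = ∫ x, (x * ((Λ (μ + σ * x) - Λ μ) / σ) + Λ μ / σ * x) ∂gaussianReal 0 1 := by
        rw [integral_gaussDensity_mul hσ, ← integral_const_mul]
        congr 1 with x
        field_simp
        ring
    _ = ∫ x, x * ((Λ (μ + σ * x) - Λ μ) / σ) ∂gaussianReal 0 1 := by
        rw [integral_add (hΛ.integrable_mul_div_sub hσ) hid, integral_const_mul,
          integral_id_gaussianReal, mul_zero, add_zero]

lemma tendsto_integral_comp_const_add_mul (hΛ : LipschitzWith K Λ) :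
    Tendsto (fun σ ↦ ∫ x, Λ (μ + σ * x) ∂gaussianReal 0 1) (𝓝[>] 0) (𝓝 (Λ μ)) := by
  have hlim : ∫ _, Λ μ ∂gaussianReal 0 1 = Λ μ := by simp
  rw [← hlim]
  refine tendsto_integral_filter_of_dominated_convergence (fun x ↦ |Λ μ| + K * |x|)
    (Eventually.of_forall fun σ ↦ (hΛ.continuous.comp (by fun_prop)).aestronglyMeasurable)
    ?_ ((integrable_const _).add (((memLp_id_gaussianReal 1).integrable le_rfl).abs.const_mul _))
    (ae_of_all _ fun x ↦ (hΛ.continuous.tendsto μ).comp (tendsto_const_add_mul_nhdsGT_zero μ x))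
  filter_upwards [Ioo_mem_nhdsGT one_pos] with σ hσ
  refine ae_of_all _ fun x ↦ ?_
  have h := hΛ.dist_le_mul (μ + σ * x) μ
  rw [Real.dist_eq, Real.dist_eq, add_sub_cancel_left, abs_mul, abs_of_pos hσ.1] at h
  calc ‖Λ (μ + σ * x)‖ ≤ |Λ μ| + K * (σ * |x|) := by
        rw [Real.norm_eq_abs]; linarith [abs_sub_abs_le_abs_sub (Λ (μ + σ * x)) (Λ μ)]
    _ ≤ |Λ μ| + K * |x| := by
        gcongr; exact mul_le_of_le_one_left (abs_nonneg x) hσ.2.le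

lemma tendsto_expBias (hΛ : LipschitzWith K Λ) :
    Tendsto (expBias Λ μ) (𝓝[>] 0) (𝓝 (Λ μ)) :=
  hΛ.tendsto_integral_comp_const_add_mul.congr'
    (eventually_mem_nhdsWithin.mono fun _ hσ ↦ (expBias_eq_integral Λ μ hσ).symm)

lemma tendsto_chiFun (hΛ : LipschitzWith K Λ) (hd : DifferentiableAt ℝ Λ μ) :
    Tendsto (chiFun Λ μ) (𝓝[>] 0) (𝓝 (deriv Λ μ)) := by
  have hlim : ∫ x, x * (deriv Λ μ * x) ∂gaussianReal 0 1 = deriv Λ μ := by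
    simp_rw [mul_left_comm _ (deriv Λ μ), ← sq]
    rw [integral_const_mul, integral_sq_gaussianReal_zero_one, mul_one]
  rw [← hlim]
  refine (tendsto_integral_filter_of_dominated_convergence (fun x ↦ K * x ^ 2)
    ?_ ?_ ((integrable_sq_gaussianReal 0 1).const_mul K)
    (ae_of_all _ fun x ↦ (hd.tendsto_div_sub_comp_const_add_mul x).const_mul x)).congr' ?_
  · filter_upwards [self_mem_nhdsWithin] with σ hσ
    exact (hΛ.integrable_mul_div_sub hσ).aestronglyMeasurable
  · filter_upwards [self_mem_nhdsWithin] with σ hσ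
    exact ae_of_all _ fun x ↦ hΛ.abs_mul_div_sub_le hσ x
  · filter_upwards [self_mem_nhdsWithin] with σ hσ
    exact (hΛ.chiFun_eq_integral hσ).symm

theorem tendsto_chiFun_sq_div (hΛ : LipschitzWith K Λ) (hd : DifferentiableAt ℝ Λ μ)
    (hμ : |Λ μ| ≠ 1) :
    (∀ᶠ σ in 𝓝[>] (0 : ℝ), 1 - expBias Λ μ σ ^ 2 ≠ 0) ∧
    Tendsto (fun σ ↦ chiFun Λ μ σ ^ 2 / (1 - expBias Λ μ σ ^ 2))
      (𝓝[>] 0) (𝓝 (deriv Λ μ ^ 2 / (1 - Λ μ ^ 2))) := by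
  have hne : 1 - Λ μ ^ 2 ≠ 0 := by
    rwa [sub_ne_zero, ne_comm, ← sq_abs, Ne, pow_eq_one_iff_of_nonneg (abs_nonneg _) two_ne_zero]
  have hden : Tendsto (fun σ ↦ 1 - expBias Λ μ σ ^ 2) (𝓝[>] 0) (𝓝 (1 - Λ μ ^ 2)) :=
    tendsto_const_nhds.sub (hΛ.tendsto_expBias.pow 2)
  exact ⟨hden.eventually_ne hne, ((hΛ.tendsto_chiFun hd).pow 2).div hden hne⟩

end LipschitzWith

lemma LipschitzWith.finset_sum {ι α E : Type*} [PseudoEMetricSpace α] [SeminormedAddCommGroup E]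
    {s : Finset ι} {K : ι → ℝ≥0} {f : ι → α → E} (hf : ∀ i ∈ s, LipschitzWith (K i) (f i)) :
    LipschitzWith (∑ i ∈ s, K i) (fun x ↦ ∑ i ∈ s, f i x) := by
  induction s using Finset.cons_induction with
  | empty => simpa using LipschitzWith.const (0 : E)
  | cons i s _ ih =>
    simp only [Finset.sum_cons]
    exact (hf i (Finset.mem_cons_self i s)).add (ih fun j hj ↦ hf j (Finset.mem_cons_of_mem hj))

noncomputable def trigPoly (s : Finset ℕ) (c d : ℕ → ℝ) (θ : ℝ) : ℝ :=
  ∑ l ∈ s, (c l * cos (l * θ) + d l * sin (l * θ))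

lemma exists_lipschitzWith_trigPoly (s : Finset ℕ) (c d : ℕ → ℝ) :
    ∃ K, LipschitzWith K (trigPoly s c d) :=
  ⟨_, LipschitzWith.finset_sum fun l _ ↦
    ((lipschitzWith_smul (c l)).comp (lipschitzWith_cos.comp (lipschitzWith_smul (l : ℝ)))).add
    ((lipschitzWith_smul (d l)).comp (lipschitzWith_sin.comp (lipschitzWith_smul (l : ℝ))))⟩

lemma differentiable_trigPoly (s : Finset ℕ) (c d : ℕ → ℝ) :
    Differentiable ℝ (trigPoly s c d) := by
  unfold trigPoly
  fun_prop

/-- for a trigonometric polynomial bias with |Λ(μ)| ≠ 1, as σ → 0⁺ the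
variance reduction factor χ(μ,σ)²/(1 − b(μ,σ)²) tends to the Fisher information
Λ'(μ)²/(1 − Λ(μ)²); in particular 1 − b(μ,σ)² ≠ 0 for all sufficiently small σ > 0. -/
theorem statement7 (N : ℕ) (c d : ℕ → ℝ) (Λ : ℝ → ℝ)
    (hΛ : ∀ θ, Λ θ = ∑ l ∈ Finset.range (N + 1),
      (c l * Real.cos (l * θ) + d l * Real.sin (l * θ)))
    (μ : ℝ) (hμ : |Λ μ| ≠ 1) :
    (∀ᶠ σ in 𝓝[>] (0 : ℝ), 1 - (expBias Λ μ σ) ^ 2 ≠ 0) ∧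
    Tendsto (fun σ : ℝ => (chiFun Λ μ σ) ^ 2 / (1 - (expBias Λ μ σ) ^ 2))
      (𝓝[>] (0 : ℝ)) (𝓝 ((deriv Λ μ) ^ 2 / (1 - (Λ μ) ^ 2))) := by
  obtain rfl : Λ = trigPoly (Finset.range (N + 1)) c d := funext hΛ
  obtain ⟨K, hK⟩ := exists_lipschitzWith_trigPoly (Finset.range (N + 1)) c d
  exact hK.tendsto_chiFun_sq_div (differentiable_trigPoly _ c d μ) hμ
end

section
/- Let α ≥ 1 and l ∈ ℕ. Then Ξ_l^α ≠ ∅ if and only if l ≤ ⌈α/2⌉. -/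
/-- The generator `p` of the infinite dihedral group `C₂ * C₂`, realized as the
reflection `sr 0` in `DihedralGroup 0`. -/
def pgen : DihedralGroup 0 := DihedralGroup.sr 0

/-- The generator `q` of the infinite dihedral group `C₂ * C₂`, realized as the
reflection `sr 1` in `DihedralGroup 0`. -/
def qgen : DihedralGroup 0 := DihedralGroup.sr 1

/-- `g^b` for a bit `b`: `g⁰ = 1`, `g¹ = g`. -/
def bpow (g : DihedralGroup 0) (b : Bool) : DihedralGroup 0 := if b then g else 1

/-- The generator at (0-based) index `i`, i.e. at 1-based position `i+1`:
`q` at odd positions, `p` at even positions. -/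
def genAt (i : ℕ) : DihedralGroup 0 := if i % 2 = 0 then qgen else pgen

/-- The word `w(x) = r_n^{x_n} ⋯ r_2^{x_2} r_1^{x_1}` associated with a bit string
`x = x₁…x_n`, where `r_i = q` if `i` is odd and `r_i = p` if `i` is even. -/
def wword {n : ℕ} (x : Fin n → Bool) : DihedralGroup 0 :=
  ((List.finRange n).reverse.map (fun i => bpow (genAt i.val) (x i))).prod

/-- The reduced word `t(u,k,v) = p^u (qp)^k q^v`. -/
def tword (u : Bool) (k : ℕ) (v : Bool) : DihedralGroup 0 :=
  bpow pgen u * (qgen * pgen) ^ k * bpow qgen v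

/-- `Θⁿ_{ukv}` : the set of bit strings `x` of length `n` with `w(x) = p^u (qp)^k q^v`,
empty by convention when `k < 0`. -/
def Theta (n : ℕ) (u : Bool) (k : ℤ) (v : Bool) : Finset (Fin n → Bool) :=
  if k < 0 then ∅ else Finset.univ.filter (fun x => wword x = tword u k.toNat v)

/-- `Ξ_l^α = Θ^α_{0,l,0} ∪ Θ^α_{1,l,0} ∪ Θ^α_{0,l−1,1} ∪ Θ^α_{1,l−1,1}`. -/
def Xi (α l : ℕ) : Finset (Fin α → Bool) :=
  Theta α false l false ∪ Theta α true l false ∪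
    Theta α false ((l : ℤ) - 1) true ∪ Theta α true ((l : ℤ) - 1) true

/-!
The reduced word `t(u,k,v) = p^u (qp)^k q^v` has length `u + 2k + v`, whereas `w(x)` is a product of
at most `α` generators, so `x ∈ Ξ_l^α` forces `2l - 1 ≤ α`. Conversely, for `l ≥ 1` the string
`1^(2l-1) 0^(α-2l+1)` has `w(x) = (qp)^(l-1) q ∈ Θ^α_{0,l-1,1}`.
-/
open DihedralGroup

/-- Length of the reduced word in `p = sr 0`, `q = sr 1`: `r a` is `(pq)^a` or `(qp)^(-a)`, and
`sr a` is `q (pq)^(a-1)` or `(qp)^(-a) p`, according to the sign of `a`. -/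
def wordLength : DihedralGroup 0 → ℕ
  | r a => (2 * a).natAbs
  | sr a => (2 * a - 1).natAbs

lemma wordLength_genAt_mul (i : ℕ) (g : DihedralGroup 0) :
    wordLength (genAt i * g) ≤ wordLength g + 1 := by
  unfold genAt pgen qgen
  split_ifs <;> cases g <;> simp only [sr_mul_r, sr_mul_sr, wordLength] <;> omega

lemma wordLength_bpow_genAt_mul (i : ℕ) (b : Bool) (g : DihedralGroup 0) :
    wordLength (bpow (genAt i) b * g) ≤ wordLength g + 1 := by
  cases b
  · simp [bpow]
  · exact wordLength_genAt_mul i g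

lemma wword_succ {n : ℕ} (x : Fin (n + 1) → Bool) :
    wword x = bpow (genAt n) (x (Fin.last n)) * wword (fun i => x i.castSucc) := by
  simp [wword, List.finRange_succ_last, List.map_reverse, Function.comp_def]

lemma wordLength_wword_le {n : ℕ} (x : Fin n → Bool) : wordLength (wword x) ≤ n := by
  induction n with
  | zero => exact Nat.zero_le _
  | succ n ih =>
    rw [wword_succ]
    exact (wordLength_bpow_genAt_mul _ _ _).trans (Nat.add_le_add_right (ih _) 1)

lemma wordLength_tword (u : Bool) (k : ℕ) (v : Bool) :
    wordLength (tword u k v) = u.toNat + 2 * k + v.toNat := by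
  cases u <;> cases v <;>
    simp [tword, bpow, pgen, qgen, r_mul_sr, sr_mul_r, sr_mul_sr, wordLength] <;>
    omega

lemma wword_prefix {n m : ℕ} (hm : m ≤ n) :
    wword (fun i : Fin n => decide (i.val < m)) = wword (fun _ : Fin m => true) := by
  induction n with
  | zero =>
    obtain rfl : m = 0 := by omega
    rfl
  | succ n ih =>
    rcases hm.eq_or_lt with rfl | hlt
    · congr 1
      funext i
      simp [i.isLt]
    · rw [wword_succ]
      simpa [bpow, Nat.not_lt.mpr (Nat.le_of_lt_succ hlt)] using ih (Nat.le_of_lt_succ hlt)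

lemma wword_ones_odd (k : ℕ) : wword (fun _ : Fin (2 * k + 1) => true) = tword false k true := by
  induction k with
  | zero => simp [wword, tword, bpow, genAt]
  | succ k ih =>
    rw [show 2 * (k + 1) + 1 = 2 * k + 1 + 1 + 1 by ring, wword_succ, wword_succ]
    have hq : genAt (2 * k + 2) = qgen := if_pos (by omega)
    have hp : genAt (2 * k + 1) = pgen := if_neg (by omega)
    simp [ih, hq, hp, tword, bpow, pow_succ', mul_assoc]

lemma mem_Theta_natCast {n : ℕ} (x : Fin n → Bool) (u : Bool) (k : ℕ) (v : Bool) :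
    x ∈ Theta n u k v ↔ wword x = tword u k v := by
  rw [Theta, if_neg (by omega), Finset.mem_filter, Int.toNat_natCast]
  exact and_iff_right (Finset.mem_univ x)

lemma mem_Xi_iff {n l : ℕ} (x : Fin n → Bool) :
    x ∈ Xi n l ↔ ∃ u k v, wword x = tword u k v ∧ k + v.toNat = l := by
  cases l with
  | zero => simp [Xi, Theta]
  | succ m =>
    have hm : ((m + 1 : ℕ) : ℤ) - 1 = m := by push_cast; ring
    simp only [Xi, Finset.mem_union, hm, mem_Theta_natCast]
    constructor
    · rintro (((h | h) | h) | h)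
      exacts [⟨_, _, _, h, rfl⟩, ⟨_, _, _, h, rfl⟩, ⟨_, _, _, h, rfl⟩, ⟨_, _, _, h, rfl⟩]
    · rintro ⟨u, k, v, h, hk⟩
      cases u <;> cases v <;>
        simp only [Bool.toNat_false, Bool.toNat_true, add_zero, Nat.add_right_cancel_iff] at hk <;>
        subst hk <;> tauto

theorem statement14_general (α : ℕ) (l : ℕ) :
    (Xi α l).Nonempty ↔ l ≤ (α + 1) / 2 := by
  constructor
  · rintro ⟨x, hx⟩
    obtain ⟨u, k, v, hw, rfl⟩ := (mem_Xi_iff x).1 hx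
    have hlen := wordLength_wword_le x
    rw [hw, wordLength_tword] at hlen
    cases u <;> cases v <;> simp only [Bool.toNat_false, Bool.toNat_true] at hlen ⊢ <;> omega
  · intro hl
    cases l with
    | zero =>
      refine ⟨fun i => decide (i.val < 0), (mem_Xi_iff _).2 ⟨false, 0, false, ?_, rfl⟩⟩
      rw [wword_prefix (Nat.zero_le α)]
      simp [wword, tword, bpow]
    | succ k =>
      refine ⟨fun i => decide (i.val < 2 * k + 1), (mem_Xi_iff _).2 ⟨false, k, true, ?_, rfl⟩⟩
      rw [wword_prefix (by omega), wword_ones_odd]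

/-- `Ξ_l^α ≠ ∅` iff `l ≤ ⌈α/2⌉`. -/
theorem statement14 (α : ℕ) (hα : 1 ≤ α) (l : ℕ) :
    (Xi α l).Nonempty ↔ l ≤ (α + 1) / 2 :=
  statement14_general α l
end

section
/- Let m ∈ ℕ and l ∈ ℕ. Then: |Ξ_0^{2m}| = 2·C(2m−1, m−1) for m ≥ 1; |Ξ_l^{2m}| = 2·C(2m, m−l) for m ≥ 1 and l ≥ 1; |Ξ_0^{2m+1}| = C(2m+1, m); and |Ξ_l^{2m+1}| = C(2m+2, m+1−l) for l ≥ 1. Here C(n,r) is the binomial coefficient (which vanishes when r > n or r < 0). -/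
/-!
Identify `C₂ * C₂ = DihedralGroup 0` with `ℤ` via `r a ↦ 2a`, `sr a ↦ 2a - 1`. Left
multiplication by `p` becomes the reflection swapping `2k - 1 ↔ 2k`, and by `q` the one swapping
`2k ↔ 2k + 1`; so `w(x)` is a lazy walk on `ℤ` in which the bit `x_i` decides whether the `i`-th
reflection is applied. Pascal's rule then shows that exactly `C(n, ⌊(e + n) / 2⌋)` bit strings of
length `n + 1` end at `e`. The four words defining `Ξ_l` end at `-2l, -2l - 1, 2l - 1, 2l`, and
the formulas follow by Pascal's rule and the symmetry of binomial coefficients.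
-/

open DihedralGroup Finset

namespace DihedralGroup

-- `ZMod 0` is `ℤ` by definition, which the patterns use.
def toInt : DihedralGroup 0 → ℤ
  | .r (a : ℤ) => 2 * a
  | .sr (a : ℤ) => 2 * a - 1

@[simp] lemma toInt_r (a : ℤ) : toInt (r (Int.cast a)) = 2 * a := rfl

@[simp] lemma toInt_sr (a : ℤ) : toInt (sr (Int.cast a)) = 2 * a - 1 := rfl

lemma exists_eq_r_or_exists_eq_sr (g : DihedralGroup 0) :
    (∃ a : ℤ, g = r (Int.cast a)) ∨ ∃ a : ℤ, g = sr (Int.cast a) := by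
  rcases g with a | a
  exacts [.inl ⟨a, rfl⟩, .inr ⟨a, rfl⟩]

lemma toInt_injective : Function.Injective toInt := by
  intro g h hgh
  rcases g.exists_eq_r_or_exists_eq_sr with ⟨a, rfl⟩ | ⟨a, rfl⟩ <;>
    rcases h.exists_eq_r_or_exists_eq_sr with ⟨b, rfl⟩ | ⟨b, rfl⟩ <;>
    simp only [toInt_r, toInt_sr] at hgh
  all_goals first | omega | rw [show a = b by omega]

end DihedralGroup

lemma pgen_eq : pgen = sr (Int.cast 0) := by simp [pgen]

lemma qgen_eq : qgen = sr (Int.cast 1) := by simp [qgen]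

def reflectAt (i : ℕ) (e : ℤ) : ℤ := if (i + e) % 2 = 0 then e + 1 else e - 1

lemma reflectAt_involutive (i : ℕ) : Function.Involutive (reflectAt i) := by
  intro e
  unfold reflectAt
  split_ifs <;> omega

lemma toInt_genAt_mul (i : ℕ) (g : DihedralGroup 0) :
    (genAt i * g).toInt = reflectAt i g.toInt := by
  unfold genAt reflectAt
  rcases g.exists_eq_r_or_exists_eq_sr with ⟨a, rfl⟩ | ⟨a, rfl⟩ <;> split_ifs <;>
    simp only [pgen_eq, qgen_eq, sr_mul_r, sr_mul_sr, ← Int.cast_add, ← Int.cast_sub, toInt_r,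
      toInt_sr] at * <;>
    omega

lemma toInt_tword (u : Bool) (k : ℕ) (v : Bool) :
    (tword u k v).toInt =
      if u then (if v then 2 * (k : ℤ) + 2 else -2 * k - 1) else (if v then 2 * k + 1 else -2 * k) := by
  have hqp : (qgen * pgen) ^ k = r (Int.cast (-k)) := by simp [qgen, pgen, sr_mul_sr]
  rw [tword, hqp]
  cases u <;> cases v <;>
    simp only [bpow, pgen_eq, qgen_eq, if_true, Bool.false_eq_true, if_false, one_mul, mul_one,
      sr_mul_r, r_mul_sr, sr_mul_sr, ← Int.cast_add, ← Int.cast_sub, toInt_r, toInt_sr] <;>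
    omega

lemma wword_snoc {n : ℕ} (y : Fin n → Bool) (b : Bool) :
    wword (Fin.snoc y b : Fin (n + 1) → Bool) = bpow (genAt n) b * wword y := by
  simp [wword, List.finRange_succ_last, List.map_reverse, Function.comp_def]

def walkCount (n : ℕ) (e : ℤ) : ℕ := #{x : Fin n → Bool | (wword x).toInt = e}

lemma walkCount_zero (e : ℤ) : walkCount 0 e = if e = 0 then 1 else 0 := by
  have h : ∀ x : Fin 0 → Bool, (wword x).toInt = 0 := fun x => by simp [wword]; rfl
  simp [walkCount, h, eq_comm, apply_ite card]

lemma walkCount_succ (n : ℕ) (e : ℤ) :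
    walkCount (n + 1) e = walkCount n e + walkCount n (reflectAt n e) := by
  simp only [walkCount, card_filter]
  rw [← (Fin.snocEquiv fun _ => Bool).sum_comp, Fintype.sum_prod_type, Fintype.sum_bool]
  simp [Fin.snocEquiv, wword_snoc, bpow, toInt_genAt_mul, (reflectAt_involutive n).eq_iff,
    add_comm]

def intChoose (n : ℕ) (k : ℤ) : ℕ := if 0 ≤ k then n.choose k.toNat else 0

lemma intChoose_zero_left (k : ℤ) : intChoose 0 k = if k = 0 then 1 else 0 := by
  unfold intChoose
  split_ifs with h1 h2 h2
  · simp [show k.toNat = 0 by omega]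
  · exact Nat.choose_eq_zero_of_lt (by omega)
  · omega
  · rfl

lemma intChoose_succ (n : ℕ) (k : ℤ) :
    intChoose (n + 1) k = intChoose n (k - 1) + intChoose n k := by
  unfold intChoose
  rcases lt_trichotomy k 0 with h | rfl | h
  · rw [if_neg (by omega), if_neg (by omega), if_neg (by omega)]
  · simp
  · simp only [show 0 ≤ k by omega, show 0 ≤ k - 1 by omega, if_true,
      show k.toNat = (k - 1).toNat + 1 by omega, Nat.choose_succ_succ']

lemma walkCount_succ_eq_intChoose (n : ℕ) (e : ℤ) :
    walkCount (n + 1) e = intChoose n ((e + n) / 2) := by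
  induction n generalizing e with
  | zero =>
    rw [walkCount_succ, walkCount_zero, walkCount_zero, intChoose_zero_left]
    unfold reflectAt
    split_ifs <;> omega
  | succ n ih =>
    rw [walkCount_succ, ih, ih, intChoose_succ]
    unfold reflectAt
    split_ifs
    · congr 2 <;> omega
    · rw [add_comm]
      congr 2 <;> omega

lemma walkCount_succ_eq_choose {n j : ℕ} {e : ℤ} (h : (e + n) / 2 = j) :
    walkCount (n + 1) e = n.choose j := by
  simp [walkCount_succ_eq_intChoose, intChoose, h]

lemma walkCount_succ_eq_choose_sub {n j : ℕ} {e : ℤ} (h : (e + n) / 2 + j = n) :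
    walkCount (n + 1) e = n.choose j := by
  rw [walkCount_succ_eq_intChoose, intChoose]
  split_ifs
  · rw [← Nat.choose_symm (by omega)]
    congr 1
    omega
  · exact (Nat.choose_eq_zero_of_lt (by omega)).symm

def xiEnds (l : ℕ) : Finset ℤ := {-2 * (l : ℤ), -2 * (l : ℤ) - 1, 2 * (l : ℤ) - 1, 2 * (l : ℤ)}

lemma mem_Xi {α l : ℕ} {x : Fin α → Bool} : x ∈ Xi α l ↔ (wword x).toInt ∈ xiEnds l := by
  simp only [Xi, Theta, xiEnds, mem_union, apply_ite (x ∈ ·), notMem_empty, mem_filter, mem_univ,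
    true_and, ← toInt_injective.eq_iff, toInt_tword, Bool.false_eq_true, ↓reduceIte, mem_insert,
    mem_singleton, if_false_left, Int.toNat_natCast]
  omega

lemma card_Xi (α l : ℕ) : #(Xi α l) = ∑ e ∈ xiEnds l, walkCount α e := by
  simp only [walkCount]
  rw [sum_card_fiberwise_eq_card_filter]
  congr 1
  ext x
  simp [mem_Xi]

lemma card_Xi_zero (α : ℕ) : #(Xi α 0) = walkCount α 0 + walkCount α (-1) := by
  rw [card_Xi, show xiEnds 0 = {0, -1} by decide, sum_pair (by decide)]

lemma card_Xi_of_pos (α : ℕ) {l : ℕ} (hl : 1 ≤ l) :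
    #(Xi α l) = walkCount α (-2 * l) + walkCount α (-2 * l - 1) + walkCount α (2 * l - 1) +
      walkCount α (2 * l) := by
  rw [card_Xi, xiEnds, sum_insert (by simp; omega), sum_insert (by simp; omega),
    sum_pair (by omega)]
  ring

lemma card_Xi_even_zero {m : ℕ} (hm : 1 ≤ m) :
    #(Xi (2 * m) 0) = 2 * (2 * m - 1).choose (m - 1) := by
  obtain ⟨k, rfl⟩ : ∃ k, m = k + 1 := ⟨m - 1, by omega⟩
  rw [show 2 * (k + 1) = 2 * k + 1 + 1 by ring, card_Xi_zero,
    walkCount_succ_eq_choose (j := k) (by omega), walkCount_succ_eq_choose (j := k) (by omega)]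
  simp [two_mul]

lemma card_Xi_even_of_pos {m l : ℕ} (hm : 1 ≤ m) (hl : 1 ≤ l) :
    #(Xi (2 * m) l) = 2 * (2 * m).choose (m + l) := by
  obtain ⟨k, rfl⟩ : ∃ k, m = k + 1 := ⟨m - 1, by omega⟩
  rw [show 2 * (k + 1) = 2 * k + 1 + 1 by ring, card_Xi_of_pos _ hl,
    walkCount_succ_eq_choose_sub (j := k + l + 1) (by omega),
    walkCount_succ_eq_choose_sub (j := k + l + 1) (by omega),
    walkCount_succ_eq_choose (j := k + l) (by omega),
    walkCount_succ_eq_choose (j := k + l) (by omega),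
    show k + 1 + l = k + l + 1 by ring, Nat.choose_succ_succ' (2 * k + 1) (k + l)]
  ring

lemma card_Xi_odd_zero (m : ℕ) : #(Xi (2 * m + 1) 0) = (2 * m + 1).choose m := by
  rw [card_Xi_zero, walkCount_succ_eq_choose (j := m) (by omega),
    walkCount_succ_eq_choose_sub (j := m + 1) (by omega), ← Nat.choose_succ_succ',
    Nat.choose_symm_half]

lemma card_Xi_odd_of_pos (m : ℕ) {l : ℕ} (hl : 1 ≤ l) :
    #(Xi (2 * m + 1) l) = (2 * m + 2).choose (m + 1 + l) := by
  obtain ⟨j, rfl⟩ : ∃ j, l = j + 1 := ⟨l - 1, by omega⟩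
  rw [card_Xi_of_pos _ hl,
    walkCount_succ_eq_choose_sub (j := m + j + 1) (by omega),
    walkCount_succ_eq_choose_sub (j := m + j + 2) (by omega),
    walkCount_succ_eq_choose (j := m + j) (by omega),
    walkCount_succ_eq_choose (j := m + j + 1) (by omega),
    show m + 1 + (j + 1) = m + j + 1 + 1 by ring, Nat.choose_succ_succ' (2 * m + 1),
    Nat.choose_succ_succ', Nat.choose_succ_succ']
  ring

/-- cardinalities of `Ξ_l^α`. Here the lower binomial indices `m−l` and
`m+1−l` of the natural-language statement are written in the equivalent form `m+l` and
`m+1+l` (using `C(n,r) = C(n,n−r)`), which also vanishes exactly when the intended value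
is zero (`l > m`, resp. `l > m+1`). -/
theorem statement15 (m l : ℕ) :
    (1 ≤ m → (Xi (2 * m) 0).card = 2 * Nat.choose (2 * m - 1) (m - 1)) ∧
    (1 ≤ m → 1 ≤ l → (Xi (2 * m) l).card = 2 * Nat.choose (2 * m) (m + l)) ∧
    ((Xi (2 * m + 1) 0).card = Nat.choose (2 * m + 1) m) ∧
    (1 ≤ l → (Xi (2 * m + 1) l).card = Nat.choose (2 * m + 2) (m + 1 + l)) :=
  ⟨card_Xi_even_zero, card_Xi_even_of_pos, card_Xi_odd_zero m, card_Xi_odd_of_pos m⟩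
end

section
/- Let L ≥ 1, x ∈ ℝ^{2L} and θ ∈ ℝ, and define the ancilla-based bias Λ^AB(θ;x) = Re Q₀₀[x](θ). Then Λ^AB(θ;x) = Σ_{l=0}^{L} μ_l(x) cos(lθ), where μ_l(x) = Σ_{y ∈ Ξ_l^{2L}, wt(y) ≡ 0 (mod 4)} ζ_y(x) − Σ_{y ∈ Ξ_l^{2L}, wt(y) ≡ 2 (mod 4)} ζ_y(x). In particular, θ ↦ Λ^AB(θ;x) is a cosine polynomial of degree at most L. -/
noncomputable section

/-- The Pauli matrix `X = !![0,1;1,0]`. -/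
def Xm : Matrix (Fin 2) (Fin 2) ℂ := !![0, 1; 1, 0]

/-- The Pauli matrix `Z = !![1,0;0,−1]`. -/
def Zm : Matrix (Fin 2) (Fin 2) ℂ := !![1, 0; 0, -1]

/-- `P(θ) = cos θ • Z + sin θ • X`. -/
def Pmat (θ : ℝ) : Matrix (Fin 2) (Fin 2) ℂ :=
  (Real.cos θ : ℂ) • Zm + (Real.sin θ : ℂ) • Xm

/-- `U(θ;α) = cos α • I − i sin α • P(θ)`. -/
def Umat (θ a : ℝ) : Matrix (Fin 2) (Fin 2) ℂ :=
  (Real.cos a : ℂ) • (1 : Matrix (Fin 2) (Fin 2) ℂ) - (Complex.I * (Real.sin a : ℂ)) • Pmat θ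

/-- `V(β) = cos β • I − i sin β • Z`. -/
def Vmat (b : ℝ) : Matrix (Fin 2) (Fin 2) ℂ :=
  (Real.cos b : ℂ) • (1 : Matrix (Fin 2) (Fin 2) ℂ) - (Complex.I * (Real.sin b : ℂ)) • Zm

/-- Auxiliary recursion for `Q(θ;z)`: the boolean flag records whether the position of
the head of the list is odd (odd positions use `U(θ;·)`, even positions use `V(·)`);
the head of the list is the *rightmost* factor. -/
def Qaux (θ : ℝ) : Bool → List ℝ → Matrix (Fin 2) (Fin 2) ℂ
  | _, [] => 1
  | odd, z :: rest => Qaux θ (!odd) rest * (if odd then Umat θ z else Vmat z)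

/-- `Q(θ; (z₁,…,z_m)) = R_m(z_m) ⋯ R₂(z₂) R₁(z₁)` with `R_j = U(θ;·)` for odd `j` and
`R_j = V(·)` for even `j`. -/
def Qmat (θ : ℝ) (zs : List ℝ) : Matrix (Fin 2) (Fin 2) ℂ := Qaux θ true zs

end

/-- `ζ_y(x) = ∏_{a: y_a=0} cos(x_a) · ∏_{b: y_b=1} sin(x_b)`. -/
noncomputable def zeta {k : ℕ} (y : Fin k → Bool) (x : Fin k → ℝ) : ℝ :=
  ∏ i, (if y i then Real.sin (x i) else Real.cos (x i))

/-- The Hamming weight of a bit string. -/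
def hwt {k : ℕ} (y : Fin k → Bool) : ℕ := (Finset.univ.filter (fun i => y i = true)).card

/-!
`C₂ * C₂` is the infinite dihedral group `DihedralGroup 0`, and `p ↦ Z`, `q ↦ P(θ)` extends to a
representation `ρ` in which `(qp)ᵏ` acts as the rotation by `kθ` and `p (qp)ᵏ`, `(qp)ᵏ q` as
reflections, so the `(0,0)` entry of `ρ(g)` is `cos(lθ)` with `l` the level of `g`; and
`y ∈ Ξ_l` exactly when `w(y)` has level `l`. Expanding every factor `cos α • I - i sin α • ρ(g)`, `g ∈ {p, q}`,
writes `Q(θ;x)` as `∑_y (-i)^{wt y} ζ_y(x) ρ(w(y))`, and the real part of `(-i)^{wt y}` is `1`,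
`-1` or `0` according to `wt y mod 4`. Multiplying by `p` preserves the level and by `q` raises
it by at most one; a bit string of length `2L` has `L` letters `q`, so only levels `l ≤ L` occur.
-/

section

open DihedralGroup

abbrev zmodZeroToInt : ZMod 0 →+* ℤ := ZMod.castHom dvd_rfl ℤ

noncomputable def dihedralRep (θ : ℝ) : DihedralGroup 0 →* Matrix (Fin 2) (Fin 2) ℂ where
  toFun
    | r i => !![(Real.cos (zmodZeroToInt i * θ) : ℂ), (Real.sin (zmodZeroToInt i * θ) : ℂ);
                -(Real.sin (zmodZeroToInt i * θ) : ℂ), (Real.cos (zmodZeroToInt i * θ) : ℂ)]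
    | sr i => !![(Real.cos (zmodZeroToInt i * θ) : ℂ), (Real.sin (zmodZeroToInt i * θ) : ℂ);
                (Real.sin (zmodZeroToInt i * θ) : ℂ), -(Real.cos (zmodZeroToInt i * θ) : ℂ)]
  map_one' := by
    rw [DihedralGroup.one_def]
    simp [Matrix.one_fin_two]
  map_mul' a b := by
    cases a <;> cases b <;> simp only [r_mul_r, r_mul_sr, sr_mul_r, sr_mul_sr] <;>
      ext i j <;> fin_cases i <;> fin_cases j <;>
      simp [Matrix.mul_apply, add_mul, sub_mul, Real.cos_add, Real.sin_add, Real.cos_sub,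
        Real.sin_sub] <;> ring

lemma dihedralRep_pgen (θ : ℝ) : dihedralRep θ pgen = Zm := by
  ext i j; fin_cases i <;> fin_cases j <;> simp [dihedralRep, pgen, Zm]

lemma dihedralRep_qgen (θ : ℝ) : dihedralRep θ qgen = Pmat θ := by
  ext i j; fin_cases i <;> fin_cases j <;> simp [dihedralRep, qgen, Pmat, Zm, Xm]

def DihedralGroup.index : DihedralGroup 0 → ℤ
  | r i => zmodZeroToInt i
  | sr i => zmodZeroToInt i

def DihedralGroup.level (g : DihedralGroup 0) : ℕ := g.index.natAbs

lemma dihedralRep_apply_zero_zero (θ : ℝ) (g : DihedralGroup 0) :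
    dihedralRep θ g 0 0 = Real.cos (g.level * θ) := by
  have h : Real.cos (g.index * θ) = Real.cos (g.level * θ) := by
    rw [level, Nat.cast_natAbs, Int.cast_abs]
    rcases abs_choice (g.index : ℝ) with h | h <;> simp [h]
  cases g <;> simpa [dihedralRep, index] using congrArg Complex.ofReal h

lemma level_mul_bpow_pgen (g : DihedralGroup 0) (c : Bool) :
    (g * bpow pgen c).level = g.level := by
  cases c
  · simp [bpow]
  · cases g <;> simp [bpow, pgen, level, index]

lemma level_mul_bpow_qgen_le (g : DihedralGroup 0) (c : Bool) :
    (g * bpow qgen c).level ≤ g.level + 1 := by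
  cases c
  · simp [bpow]
  · cases g <;> simp [bpow, qgen, level, index] <;> omega

lemma qgen_mul_pgen_pow (k : ℕ) : (qgen * pgen) ^ k = r (-(k : ZMod 0)) := by
  induction k with
  | zero => rw [pow_zero, one_def]; simp
  | succ k ih => rw [pow_succ, ih, qgen, pgen, sr_mul_sr, r_mul_r]; push_cast; ring_nf

lemma level_eq_iff (g : DihedralGroup 0) (l : ℕ) :
    g.level = l ↔ g = tword false l false ∨ g = tword true l false ∨
      (1 ≤ l ∧ (g = tword false (l - 1) true ∨ g = tword true (l - 1) true)) := by
  obtain ⟨k, rfl | rfl⟩ : ∃ k : ℤ, g = r (Int.cast k) ∨ g = sr (Int.cast k) := by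
    cases g with
    | r i => exact ⟨zmodZeroToInt i, .inl (by simp)⟩
    | sr i => exact ⟨zmodZeroToInt i, .inr (by simp)⟩
  all_goals
    simp only [tword, qgen_mul_pgen_pow, bpow]
    simp only [level, index, map_intCast, Int.cast_eq,
      Bool.false_eq_true, ↓reduceIte, one_mul, mul_one, r.injEq, sr.injEq, pgen, qgen, sr_mul_r,
      r_mul_sr, sr_mul_sr, zero_add, sub_neg_eq_add, reduceCtorEq, or_false, false_or]
    simp only [← Int.cast_natCast (R := ZMod 0), ← Int.cast_neg, ← Int.cast_one (R := ZMod 0),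
      ← Int.cast_add, Int.cast_inj]
    omega

lemma Xi_eq_filter_level (n l : ℕ) :
    Xi n l = Finset.univ.filter (fun y : Fin n → Bool => (wword y).level = l) := by
  ext y
  simp only [Finset.mem_filter, Finset.mem_univ, true_and, level_eq_iff, Xi, Theta,
    Finset.mem_union]
  have h0 : ¬ ((l : ℤ) < 0) := by omega
  rcases Nat.eq_zero_or_pos l with rfl | hl
  · simp
  · have h1 : ¬ ((l : ℤ) - 1 < 0) := by omega
    have h2 : ((l : ℤ) - 1).toNat = l - 1 := by omega
    simp [h0, h1, h2, Nat.one_le_iff_ne_zero.2 hl.ne', or_assoc]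

lemma level_one : (1 : DihedralGroup 0).level = 0 := by
  rw [one_def]; simp [level, index]

/-- The letter at 0-based position `i` of the alternating word `q p q p …` (if `b`) or
`p q p q …`; `b` plays the role of the flag of `Qaux`. -/
def altGen : Bool → ℕ → DihedralGroup 0
  | b, 0 => if b then qgen else pgen
  | b, i + 1 => altGen (!b) i

lemma altGen_true : ∀ i, altGen true i = genAt i
  | 0 => rfl
  | 1 => rfl
  | i + 2 => by
    rw [show altGen true (i + 2) = altGen true i from rfl, altGen_true i]
    simp [genAt, Nat.add_mod_right]

def altWord (b : Bool) {n : ℕ} (y : Fin n → Bool) : DihedralGroup 0 :=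
  ((List.finRange n).reverse.map fun i => bpow (altGen b i.val) (y i)).prod

lemma wword_eq_altWord {n : ℕ} (y : Fin n → Bool) : wword y = altWord true y := by
  simp only [wword, altWord, altGen_true]

lemma altWord_cons (b c : Bool) {n : ℕ} (y : Fin n → Bool) :
    altWord b (Fin.cons c y) = altWord (!b) y * bpow (altGen b 0) c := by
  simp [altWord, List.finRange_succ, List.map_reverse, Function.comp_def, altGen]

lemma level_altWord_le (b : Bool) {n : ℕ} (y : Fin n → Bool) :
    (altWord b y).level ≤ (n + b.toNat) / 2 := by
  induction n generalizing b with
  | zero => simp [altWord, level_one]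
  | succ n ih =>
    rw [← Fin.cons_self_tail y, altWord_cons]
    cases b
    · have htail := ih true (Fin.tail y)
      simp only [altGen, Bool.false_eq_true, ↓reduceIte, level_mul_bpow_pgen]
      simp only [Bool.not_false, Bool.toNat_true, Bool.toNat_false] at htail ⊢
      omega
    · have htail := ih false (Fin.tail y)
      have hstep := level_mul_bpow_qgen_le (altWord false (Fin.tail y)) (y 0)
      simp only [altGen, Bool.not_true, ↓reduceIte, Bool.toNat_true, Bool.toNat_false] at htail ⊢
      omega

/-- The coefficient of `M^c` in `cos z • 1 - (i sin z) • M`. -/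
noncomputable def branchCoeff (c : Bool) (z : ℝ) : ℂ :=
  if c then -(Complex.I * Real.sin z) else Real.cos z

lemma factor_eq_sum_branchCoeff (θ z : ℝ) (b : Bool) :
    (if b then Umat θ z else Vmat z)
      = ∑ c : Bool, branchCoeff c z • dihedralRep θ (bpow (altGen b 0) c) := by
  cases b <;>
    simp [Umat, Vmat, altGen, branchCoeff, bpow, dihedralRep_pgen, dihedralRep_qgen,
      sub_eq_add_neg, add_comm]

lemma Qaux_ofFn_eq_sum (θ : ℝ) (b : Bool) {n : ℕ} (x : Fin n → ℝ) :
    Qaux θ b (List.ofFn x)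
      = ∑ y : Fin n → Bool, (∏ i, branchCoeff (y i) (x i)) • dihedralRep θ (altWord b y) := by
  induction n generalizing b with
  | zero => simp [Qaux, altWord]
  | succ n ih =>
    rw [List.ofFn_succ, Qaux, ih, factor_eq_sum_branchCoeff, Finset.sum_mul_sum,
      Finset.sum_comm, ← (Fin.consEquiv fun _ => Bool).sum_comp, Fintype.sum_prod_type]
    refine Finset.sum_congr rfl fun c _ => Finset.sum_congr rfl fun y _ => ?_
    change _ = (∏ i, branchCoeff ((Fin.cons c y : Fin (n + 1) → Bool) i) (x i)) •
      dihedralRep θ (altWord b (Fin.cons c y))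
    simp only [altWord_cons, map_mul, Fin.prod_univ_succ, Fin.cons_zero, Fin.cons_succ,
      smul_mul_smul_comm, mul_comm]

lemma prod_branchCoeff {n : ℕ} (y : Fin n → Bool) (x : Fin n → ℝ) :
    ∏ i, branchCoeff (y i) (x i) = (-Complex.I) ^ hwt y * (zeta y x : ℂ) := by
  have hsplit : ∀ i, branchCoeff (y i) (x i) =
      (if y i then -Complex.I else 1) *
        ((if y i then Real.sin (x i) else Real.cos (x i) : ℝ) : ℂ) := by
    intro i; cases y i <;> simp [branchCoeff]
  rw [Finset.prod_congr rfl fun i _ => hsplit i, Finset.prod_mul_distrib, zeta,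
    Complex.ofReal_prod, ← Finset.prod_filter, Finset.prod_const, hwt]

lemma re_Qmat_apply_zero_zero (θ : ℝ) {n : ℕ} (x : Fin n → ℝ) :
    (Qmat θ (List.ofFn x) 0 0).re
      = ∑ y : Fin n → Bool,
          ((-Complex.I) ^ hwt y).re * zeta y x * Real.cos ((wword y).level * θ) := by
  rw [Qmat, Qaux_ofFn_eq_sum, Matrix.sum_apply, Complex.re_sum]
  refine Finset.sum_congr rfl fun y _ => ?_
  rw [Matrix.smul_apply, ← wword_eq_altWord, dihedralRep_apply_zero_zero, prod_branchCoeff,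
    smul_eq_mul, mul_assoc, ← Complex.ofReal_mul, Complex.re_mul_ofReal, mul_assoc]

lemma re_neg_I_pow (w : ℕ) :
    ((-Complex.I) ^ w).re = if w % 4 = 0 then 1 else if w % 4 = 2 then -1 else 0 := by
  have h4 : (-Complex.I) ^ 4 = 1 := by
    rw [show 4 = 2 * 2 from rfl, pow_mul, neg_sq, Complex.I_sq]; norm_num
  conv_lhs => rw [← Nat.div_add_mod w 4, pow_add, pow_mul, h4, one_pow, one_mul]
  have : w % 4 < 4 := Nat.mod_lt _ (by norm_num)
  interval_cases w % 4 <;> simp [pow_succ]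

lemma sum_re_neg_I_pow_mul {α : Type*} (s : Finset α) (w : α → ℕ) (f : α → ℝ) :
    ∑ a ∈ s, ((-Complex.I) ^ w a).re * f a
      = ∑ a ∈ s.filter (fun a => w a % 4 = 0), f a
          - ∑ a ∈ s.filter (fun a => w a % 4 = 2), f a := by
  rw [Finset.sum_filter, Finset.sum_filter, ← Finset.sum_sub_distrib]
  refine Finset.sum_congr rfl fun a _ => ?_
  rw [re_neg_I_pow]
  split_ifs <;> simp_all

end

theorem statement18_general (L : ℕ) (x : Fin (2 * L) → ℝ) (θ : ℝ) :
    (Qmat θ (List.ofFn x) 0 0).re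
      = ∑ l ∈ Finset.range (L + 1),
          ((∑ y ∈ (Xi (2 * L) l).filter (fun y => hwt y % 4 = 0), zeta y x) -
            (∑ y ∈ (Xi (2 * L) l).filter (fun y => hwt y % 4 = 2), zeta y x)) *
            Real.cos (l * θ) := by
  have hlevel (y : Fin (2 * L) → Bool) : (wword y).level ∈ Finset.range (L + 1) := by
    have := level_altWord_le true y
    rw [← wword_eq_altWord, Bool.toNat_true] at this
    exact Finset.mem_range.2 (by omega)
  rw [re_Qmat_apply_zero_zero, ← Finset.sum_fiberwise_of_maps_to fun y _ => hlevel y]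
  refine Finset.sum_congr rfl fun l _ => ?_
  rw [← Xi_eq_filter_level, ← sum_re_neg_I_pow_mul, Finset.sum_mul]
  refine Finset.sum_congr rfl fun y hy => ?_
  rw [Xi_eq_filter_level, Finset.mem_filter] at hy
  rw [hy.2]

/-- the ancilla-based bias `Λ^AB(θ;x) = Re Q₀₀[x](θ)` has the cosine
expansion `Σ_{l=0}^{L} μ_l(x) cos(lθ)` with
`μ_l(x) = Σ_{y ∈ Ξ_l^{2L}, wt(y) ≡ 0 (4)} ζ_y(x) − Σ_{y ∈ Ξ_l^{2L}, wt(y) ≡ 2 (4)} ζ_y(x)`. -/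
theorem statement18 (L : ℕ) (hL : 1 ≤ L) (x : Fin (2 * L) → ℝ) (θ : ℝ) :
    (Qmat θ (List.ofFn x) 0 0).re
      = ∑ l ∈ Finset.range (L + 1),
          ((∑ y ∈ (Xi (2 * L) l).filter (fun y => hwt y % 4 = 0), zeta y x) -
            (∑ y ∈ (Xi (2 * L) l).filter (fun y => hwt y % 4 = 2), zeta y x)) *
            Real.cos (l * θ) :=
  statement18_general L x θ
end
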